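/- For every real t, ϑ''(t) = 16·t · Σ_{k=0}^∞ (4k+1)/((4k+1)² + 4t²)². Consequently ϑ''(t) > 0 for t > 0, i.e. ϑ is strictly convex on (0, ∞). -/

import Mathlib

/-!
Put `s = 1/4 + it/2`. The hypothesis on `ϑ` says that `2 (ϑ t + (t/2) log π)` is a continuous
argument of `Γ(s) / Γ(s̄)`. Euler's limit formula `Γ(s) = lim n^s n! / ∏_{j ≤ n} (s + j)`, together
with `(s̄ + k) / (s + k) = exp (-2i arctan (2t/(4k+1)))`, exhibits another continuous argument,
`φ t = ∑ₖ (t log ((k+1)/k) - 2 arctan (2t/(4k+1)))`. Both vanish at `t = 0`, so they coincide, and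
`φ` can be differentiated termwise twice: the `k`-th term has second derivative
`32 t (4k+1) / ((4k+1)² + 4t²)²`.
-/

open Complex Real Filter Topology

theorem summable_and_hasDerivAt_tsum {ι 𝕜 F : Type*} [RCLike 𝕜] [NormedAddCommGroup F]
    [CompleteSpace F] [NormedSpace 𝕜 F] {f f' : ι → 𝕜 → F}
    (hf : ∀ n y, HasDerivAt (f n) (f' n y) y)
    (hbound : ∀ R, ∃ u : ι → ℝ, Summable u ∧ ∀ n y, ‖y‖ ≤ R → ‖f' n y‖ ≤ u n)
    (hf0 : Summable fun n => f n 0) (t : 𝕜) :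
    Summable (fun n => f n t) ∧ HasDerivAt (fun x => ∑' n, f n x) (∑' n, f' n t) t := by
  obtain ⟨u, hu, hle⟩ := hbound (‖t‖ + 1)
  have hle' : ∀ n, ∀ y ∈ Metric.ball (0 : 𝕜) (‖t‖ + 1), ‖f' n y‖ ≤ u n := fun n y hy =>
    hle n y (by simpa using (Metric.mem_ball.mp hy).le)
  have h0 : (0 : 𝕜) ∈ Metric.ball (0 : 𝕜) (‖t‖ + 1) := by simp; positivity
  have ht : t ∈ Metric.ball (0 : 𝕜) (‖t‖ + 1) := by simp
  exact ⟨summable_of_summable_hasDerivAt_of_isPreconnected hu Metric.isOpen_ball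
      (convex_ball _ _).isPreconnected (fun n y _ => hf n y) hle' h0 hf0 ht,
    hasDerivAt_tsum_of_isPreconnected hu Metric.isOpen_ball
      (convex_ball _ _).isPreconnected (fun n y _ => hf n y) hle' h0 hf0 ht⟩

theorem summable_const_div_nat_add_one_sq (C : ℝ) :
    Summable fun k : ℕ => C / ((k : ℝ) + 1) ^ 2 := by
  have h := (summable_nat_add_iff 1).mpr (Real.summable_one_div_nat_pow.mpr one_lt_two)
  simpa [div_eq_mul_inv] using h.mul_left C

theorem eq_of_exp_mul_I_eq {X : Type*} [TopologicalSpace X] [PreconnectedSpace X] {f g : X → ℝ}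
    (hf : Continuous f) (hg : Continuous g) (h : ∀ x, exp (f x * I) = exp (g x * I)) {x₀ : X}
    (h₀ : f x₀ = g x₀) : f = g := by
  have hmaps : Set.MapsTo (f - g) Set.univ (AddSubgroup.zmultiples (2 * π) : Set ℝ) := by
    intro x _
    obtain ⟨n, hn⟩ := Complex.exp_eq_exp_iff_exists_int.mp (h x)
    refine AddSubgroup.mem_zmultiples_iff.mpr ⟨n, ?_⟩
    have : ((f x - g x : ℝ) : ℂ) = ((n * (2 * π) : ℝ) : ℂ) := by
      push_cast
      linear_combination (-I) * hn + (f x - g x - n * (2 * π)) * I_sq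
    simpa using (Complex.ofReal_injective this).symm
  funext x
  have := isPreconnected_univ.constant_of_mapsTo
    (SetLike.isDiscrete_iff_discreteTopology.mpr inferInstance) (hf.sub hg).continuousOn hmaps
    (Set.mem_univ x) (Set.mem_univ x₀)
  simp only [Pi.sub_apply, h₀, sub_self] at this
  linarith

theorem div_conj_eq_exp_of_eq_norm_mul_exp {a : ℂ} {θ : ℝ} (ha : a ≠ 0)
    (h : a = ‖a‖ * exp (I * θ)) : a / (starRingEnd ℂ) a = exp (2 * θ * I) := by
  have hconj : (starRingEnd ℂ) a = ‖a‖ * exp (-(I * θ)) := by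
    conv_lhs => rw [h]
    rw [map_mul, Complex.conj_ofReal, ← Complex.exp_conj, map_mul, Complex.conj_I,
      Complex.conj_ofReal, neg_mul]
  have hnorm : (‖a‖ : ℂ) ≠ 0 := by simpa using ha
  calc a / (starRingEnd ℂ) a = ‖a‖ * exp (I * θ) / (‖a‖ * exp (-(I * θ))) := by
        rw [hconj]; exact congrArg (· / _) h
    _ = exp (2 * θ * I) := by
        rw [mul_div_mul_left _ _ hnorm, ← Complex.exp_sub]; ring_nf

theorem Complex.exp_neg_two_arctan_mul_I (x : ℝ) :
    exp (-(2 * Real.arctan x) * I) = (1 - x * I) / (1 + x * I) := by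
  have hplus : (1 : ℂ) + x * I ≠ 0 := by
    intro h; simpa using congrArg Complex.re h
  have hminus : (1 : ℂ) - x * I ≠ 0 := by
    intro h; simpa using congrArg Complex.re h
  rw [Complex.ofReal_arctan, Complex.arctan]
  have : -(2 * (-I / 2 * Complex.log ((1 + x * I) / (1 - x * I)))) * I
      = -Complex.log ((1 + x * I) / (1 - x * I)) := by
    linear_combination (Complex.log ((1 + x * I) / (1 - x * I))) * I_sq
  rw [this, Complex.exp_neg, Complex.exp_log (div_ne_zero hplus hminus), inv_div]

theorem Complex.GammaSeq_div_GammaSeq (s s' : ℂ) {N : ℕ} (hN : N ≠ 0) :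
    Complex.GammaSeq s N / Complex.GammaSeq s' N =
      (N : ℂ) ^ (s - s') * ∏ j ∈ Finset.range (N + 1), (s' + j) / (s + j) := by
  have hN' : (N : ℂ) ≠ 0 := Nat.cast_ne_zero.mpr hN
  have hfac : (N.factorial : ℂ) ≠ 0 := Nat.cast_ne_zero.mpr N.factorial_ne_zero
  rw [Complex.GammaSeq, Complex.GammaSeq, Complex.cpow_sub _ _ hN', Finset.prod_div_distrib]
  field_simp

theorem abs_log_succ_sub_log_sub_le (k : ℕ) :
    |Real.log (k + 1) - Real.log k - 4 / (4 * k + 1)| ≤ 4 / ((k : ℝ) + 1) ^ 2 := by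
  rcases Nat.eq_zero_or_pos k with rfl | hk
  · norm_num
  have hk : (1 : ℝ) ≤ k := by exact_mod_cast hk
  have hlog : Real.log (k + 1) - Real.log k = Real.log ((k + 1) / k) :=
    (Real.log_div (by positivity) (by positivity)).symm
  have hupper := Real.log_le_sub_one_of_pos (x := (k + 1) / k) (by positivity)
  have hlower := Real.one_sub_inv_le_log_of_pos (x := (k + 1) / k) (by positivity)
  have e1 : ((k : ℝ) + 1) / k - 1 = 1 / k := by field_simp; ring
  have e2 : 1 - (((k : ℝ) + 1) / k)⁻¹ = 1 / (k + 1) := by field_simp; ring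
  have hgap : 1 / (k : ℝ) - 1 / (k + 1) ≤ 4 / ((k : ℝ) + 1) ^ 2 := by
    rw [div_sub_div _ _ (by positivity) (by positivity),
      div_le_div_iff₀ (by positivity) (by positivity)]
    nlinarith
  have ha : 1 / ((k : ℝ) + 1) ≤ 4 / (4 * k + 1) := by
    rw [div_le_div_iff₀ (by positivity) (by positivity)]; linarith
  have hb : 4 / (4 * (k : ℝ) + 1) ≤ 1 / k := by
    rw [div_le_div_iff₀ (by positivity) (by positivity)]; linarith
  rw [hlog, abs_le]
  constructor <;> linarith

noncomputable section

namespace GammaPhase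

-- At `k = 0` the logarithmic part vanishes, as `Real.log 0 = 0`.
def term (k : ℕ) (t : ℝ) : ℝ :=
  t * (Real.log (k + 1) - Real.log k) - 2 * Real.arctan (2 * t / (4 * k + 1))

def termDeriv (k : ℕ) (t : ℝ) : ℝ :=
  Real.log (k + 1) - Real.log k - 4 * (4 * k + 1) / ((4 * k + 1) ^ 2 + 4 * t ^ 2)

def summand (k : ℕ) (t : ℝ) : ℝ := (4 * k + 1) / ((4 * k + 1) ^ 2 + 4 * t ^ 2) ^ 2

theorem hasDerivAt_term (k : ℕ) (t : ℝ) : HasDerivAt (term k) (termDeriv k t) t := by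
  have hlin : HasDerivAt (fun t : ℝ => 2 * t / (4 * k + 1)) (2 / (4 * k + 1)) t := by
    simpa using ((hasDerivAt_id t).const_mul 2).div_const (4 * (k : ℝ) + 1)
  have := (hasDerivAt_mul_const (Real.log (k + 1) - Real.log k)).sub
    (((Real.hasDerivAt_arctan _).comp t hlin).const_mul 2)
  refine this.congr_deriv ?_
  simp only [termDeriv]
  field_simp
  ring

theorem hasDerivAt_termDeriv (k : ℕ) (t : ℝ) :
    HasDerivAt (termDeriv k) (32 * t * summand k t) t := by
  have hden : (0 : ℝ) < (4 * k + 1) ^ 2 + 4 * t ^ 2 := by positivity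
  have hsq : HasDerivAt (fun t : ℝ => (4 * (k : ℝ) + 1) ^ 2 + 4 * t ^ 2) (8 * t) t := by
    refine (((hasDerivAt_pow 2 t).const_mul 4).const_add ((4 * (k : ℝ) + 1) ^ 2)).congr_deriv ?_
    ring
  refine ((hasDerivAt_const t (Real.log (k + 1) - Real.log k)).sub
    ((hasDerivAt_const t (4 * (4 * (k : ℝ) + 1))).div hsq hden.ne')).congr_deriv ?_
  simp only [summand]
  field_simp
  ring

theorem summand_pos (k : ℕ) (t : ℝ) : 0 < summand k t := by
  unfold summand; positivity

theorem summand_le (k : ℕ) (t : ℝ) : summand k t ≤ 1 / ((k : ℝ) + 1) ^ 2 := by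
  have hc : (k : ℝ) + 1 ≤ 4 * k + 1 := by linarith
  have hden : (4 * (k : ℝ) + 1) ^ 2 ≤ (4 * k + 1) ^ 2 + 4 * t ^ 2 := by nlinarith
  rw [summand, div_le_div_iff₀ (by positivity) (by positivity)]
  calc (4 * (k : ℝ) + 1) * ((k : ℝ) + 1) ^ 2 ≤ (4 * k + 1) * (4 * k + 1) ^ 2 * (4 * k + 1) := by
        nlinarith [mul_le_mul hc hc (by positivity) (by positivity)]
    _ = ((4 * (k : ℝ) + 1) ^ 2) ^ 2 := by ring
    _ ≤ 1 * ((4 * k + 1) ^ 2 + 4 * t ^ 2) ^ 2 := by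
        rw [one_mul]; exact pow_le_pow_left₀ (by positivity) hden 2

theorem abs_mul_summand_le (k : ℕ) (t : ℝ) :
    |32 * t * summand k t| ≤ 8 / ((k : ℝ) + 1) ^ 2 := by
  set c : ℝ := 4 * k + 1
  set D : ℝ := c ^ 2 + 4 * t ^ 2
  have hc : (k : ℝ) + 1 ≤ c := by linarith
  have hcD : c ^ 2 ≤ D := le_add_of_nonneg_right (by positivity)
  have hamgm : 4 * |t| * c ≤ D := by nlinarith [sq_nonneg (c - 2 * |t|), sq_abs t]
  have hsummand : summand k t = c / D ^ 2 := rfl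
  rw [abs_mul, abs_mul, hsummand, abs_of_nonneg (by positivity : (0 : ℝ) ≤ c / D ^ 2)]
  calc |32| * |t| * (c / D ^ 2) = 8 * (4 * |t| * c) / D ^ 2 := by
        rw [abs_of_pos (by norm_num)]; ring
    _ ≤ 8 * D / D ^ 2 := by gcongr
    _ = 8 / D := by field_simp
    _ ≤ 8 / c ^ 2 := by gcongr
    _ ≤ 8 / ((k : ℝ) + 1) ^ 2 := by gcongr

theorem abs_termDeriv_le (k : ℕ) {R t : ℝ} (ht : |t| ≤ R) :
    |termDeriv k t| ≤ (4 + 16 * R ^ 2) / ((k : ℝ) + 1) ^ 2 := by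
  set c : ℝ := 4 * k + 1
  set D : ℝ := c ^ 2 + 4 * t ^ 2
  have hc : (k : ℝ) + 1 ≤ c := by linarith
  have hc0 : 0 < c := by linarith
  have hcD : c ^ 2 ≤ D := le_add_of_nonneg_right (by positivity)
  have hD0 : 0 < D := by positivity
  have htR : t ^ 2 ≤ R ^ 2 := by nlinarith [sq_abs t, abs_nonneg t]
  have hsplit : termDeriv k t =
      (Real.log (k + 1) - Real.log k - 4 / c) + 16 * t ^ 2 / (c * D) := by
    simp only [termDeriv]; field_simp; ring
  have hcorr : 16 * t ^ 2 / (c * D) ≤ 16 * R ^ 2 / ((k : ℝ) + 1) ^ 2 := by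
    calc 16 * t ^ 2 / (c * D) ≤ 16 * R ^ 2 / (1 * c ^ 2) := by gcongr; linarith
      _ ≤ 16 * R ^ 2 / ((k : ℝ) + 1) ^ 2 := by rw [one_mul]; gcongr
  calc |termDeriv k t| ≤ |Real.log (k + 1) - Real.log k - 4 / c| + |16 * t ^ 2 / (c * D)| := by
        rw [hsplit]; exact abs_add_le _ _
    _ ≤ 4 / ((k : ℝ) + 1) ^ 2 + 16 * R ^ 2 / ((k : ℝ) + 1) ^ 2 := by
        rw [abs_of_nonneg (by positivity : (0 : ℝ) ≤ 16 * t ^ 2 / (c * D))]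
        exact add_le_add (abs_log_succ_sub_log_sub_le k) hcorr
    _ = (4 + 16 * R ^ 2) / ((k : ℝ) + 1) ^ 2 := by ring

def phase (t : ℝ) : ℝ := ∑' k, term k t

def phaseDeriv (t : ℝ) : ℝ := ∑' k, termDeriv k t

theorem exists_summable_bound_termDeriv (R : ℝ) :
    ∃ u : ℕ → ℝ, Summable u ∧ ∀ k y, ‖y‖ ≤ R → ‖termDeriv k y‖ ≤ u k :=
  ⟨_, summable_const_div_nat_add_one_sq (4 + 16 * R ^ 2), fun k _ hy => abs_termDeriv_le k hy⟩

theorem summable_term_zero : Summable fun k => term k 0 := by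
  simp [term, summable_zero]

theorem summable_term (t : ℝ) : Summable fun k => term k t :=
  (summable_and_hasDerivAt_tsum hasDerivAt_term exists_summable_bound_termDeriv
    summable_term_zero t).1

theorem hasDerivAt_phase (t : ℝ) : HasDerivAt phase (phaseDeriv t) t :=
  (summable_and_hasDerivAt_tsum hasDerivAt_term exists_summable_bound_termDeriv
    summable_term_zero t).2

theorem summable_summand (t : ℝ) : Summable fun k => summand k t :=
  Summable.of_nonneg_of_le (fun k => (summand_pos k t).le) (fun k => summand_le k t)
    (by simpa using summable_const_div_nat_add_one_sq 1)

theorem hasDerivAt_phaseDeriv (t : ℝ) :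
    HasDerivAt phaseDeriv (32 * t * ∑' k, summand k t) t := by
  have hbound (R : ℝ) : ∃ u : ℕ → ℝ, Summable u ∧
      ∀ k y, ‖y‖ ≤ R → ‖32 * y * summand k y‖ ≤ u k :=
    ⟨_, summable_const_div_nat_add_one_sq 8, fun k y _ => abs_mul_summand_le k y⟩
  have hzero : Summable fun k => termDeriv k 0 := by
    obtain ⟨u, hu, hle⟩ := exists_summable_bound_termDeriv 0
    exact .of_norm_bounded hu fun k => hle k 0 (by simp)
  rw [← tsum_mul_left]
  exact (summable_and_hasDerivAt_tsum hasDerivAt_termDeriv hbound hzero t).2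

theorem sum_range_term (t : ℝ) (N : ℕ) :
    ∑ k ∈ Finset.range N, term k t =
      t * Real.log N + ∑ k ∈ Finset.range N, -(2 * Real.arctan (2 * t / (4 * k + 1))) := by
  have hlog := Finset.sum_range_sub (fun i : ℕ => Real.log i) N
  push_cast at hlog
  simp only [term]
  rw [Finset.sum_sub_distrib, ← Finset.mul_sum, hlog, Real.log_zero, sub_zero,
    Finset.sum_neg_distrib, sub_eq_add_neg]

theorem exp_sum_range_term_mul_I (t : ℝ) {N : ℕ} (hN : N ≠ 0) :
    exp ((∑ k ∈ Finset.range N, term k t : ℝ) * I) =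
      (N : ℂ) ^ (t * I) * ∏ k ∈ Finset.range N,
        (1 / 4 - I * t / 2 + k) / (1 / 4 + I * t / 2 + k) := by
  have hN' : (N : ℂ) ≠ 0 := Nat.cast_ne_zero.mpr hN
  rw [sum_range_term, Complex.ofReal_add, add_mul, Complex.exp_add, Complex.ofReal_sum,
    Finset.sum_mul, Complex.exp_sum, Complex.cpow_def_of_ne_zero hN']
  congr 1
  · rw [← Complex.ofReal_natCast, ← Complex.ofReal_log N.cast_nonneg]; push_cast; ring_nf
  · refine Finset.prod_congr rfl fun k _ => ?_
    have hc : (4 * (k : ℂ) + 1) ≠ 0 := by exact_mod_cast (by positivity : (4 * (k : ℝ) + 1) ≠ 0)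
    have hden : 1 / 4 + I * t / 2 + k ≠ 0 := by
      intro h; have := congrArg Complex.re h; simp at this; linarith [k.cast_nonneg (α := ℝ)]
    have hplus : 1 + ((2 * t / (4 * k + 1) : ℝ) : ℂ) * I ≠ 0 := by
      intro h; simpa [-Complex.ofReal_div] using congrArg Complex.re h
    rw [Complex.ofReal_neg, Complex.ofReal_mul, Complex.ofReal_ofNat, exp_neg_two_arctan_mul_I,
      div_eq_div_iff hplus hden]
    push_cast
    field_simp
    ring

theorem exp_phase_mul_I (t : ℝ) :
    exp (phase t * I) = Gamma (1 / 4 + I * t / 2) / Gamma (1 / 4 - I * t / 2) := by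
  set z : ℂ := 1 / 4 + I * t / 2
  set w : ℂ := 1 / 4 - I * t / 2
  have hpartial : Tendsto (fun N => exp ((∑ k ∈ Finset.range N, term k t : ℝ) * I)) atTop
      (𝓝 (exp (phase t * I))) :=
    ((continuous_ofReal.mul continuous_const).cexp.tendsto _).comp
      (summable_term t).hasSum.tendsto_sum_nat
  have hlast : Tendsto (fun N : ℕ => (w + N) / (z + N)) atTop (𝓝 1) := by
    have := (tendsto_natCast_div_add_atTop z).div (tendsto_natCast_div_add_atTop w) one_ne_zero
    rw [div_one] at this
    refine this.congr' ((eventually_ne_atTop 0).mono fun N hN => ?_)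
    have hN' : (N : ℂ) ≠ 0 := Nat.cast_ne_zero.mpr hN
    rw [Pi.div_apply, div_div_div_cancel_left' _ _ hN', add_comm (N : ℂ) w, add_comm (N : ℂ) z]
  have hGamma := (GammaSeq_tendsto_Gamma z).div (GammaSeq_tendsto_Gamma w)
    (Gamma_ne_zero_of_re_pos (by simp [w]))
  refine tendsto_nhds_unique ?_ hGamma
  rw [← mul_one (Complex.exp _)]
  refine (hpartial.mul hlast).congr' ((eventually_ne_atTop 0).mono fun N hN => ?_)
  rw [Pi.div_apply, GammaSeq_div_GammaSeq z w hN, Finset.prod_range_succ, ← mul_assoc,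
    exp_sum_range_term_mul_I t hN, show z - w = t * I by ring]

theorem phase_eq_of_Gamma_eq_norm_mul_exp {θ : ℝ → ℝ} (hθ : Continuous θ) (hθ0 : θ 0 = 0)
    (hΓ : ∀ t : ℝ, Gamma (1 / 4 + I * t / 2) =
      ‖Gamma (1 / 4 + I * t / 2)‖ * exp (I * θ t)) :
    phase = fun t => 2 * θ t := by
  have hphase : Continuous phase :=
    continuous_iff_continuousAt.2 fun t => (hasDerivAt_phase t).continuousAt
  refine eq_of_exp_mul_I_eq hphase (by fun_prop) (fun t => ?_) (x₀ := 0)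
    (by simp [phase, term, hθ0])
  have hconj : (starRingEnd ℂ) (1 / 4 + I * t / 2) = 1 / 4 - I * t / 2 := by
    simp only [map_add, map_div₀, map_mul, map_one, map_ofNat, conj_I, conj_ofReal]
    ring
  rw [exp_phase_mul_I, ← hconj, Gamma_conj,
    div_conj_eq_exp_of_eq_norm_mul_exp (Gamma_ne_zero_of_re_pos (by simp)) (hΓ t)]
  push_cast
  ring_nf

end GammaPhase

end

open GammaPhase in
theorem theta_second_deriv_expansion_general
    (ϑ ϑ' ϑ'' : ℝ → ℝ) (hϑ0 : ϑ 0 = 0)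
    (hΓ : ∀ t : ℝ, Complex.Gamma (1 / 4 + Complex.I * (t : ℂ) / 2) =
      (‖Complex.Gamma (1 / 4 + Complex.I * (t : ℂ) / 2)‖ : ℂ) *
        Complex.exp (Complex.I * ((ϑ t + t / 2 * Real.log π : ℝ) : ℂ)))
    (hϑ' : ∀ t : ℝ, HasDerivAt ϑ (ϑ' t) t)
    (hϑ'' : ∀ t : ℝ, HasDerivAt ϑ' (ϑ'' t) t) :
    (∀ t : ℝ, Summable (fun k : ℕ =>
        ((4 * k + 1) / ((4 * k + 1) ^ 2 + 4 * t ^ 2) ^ 2 : ℝ))) ∧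
    (∀ t : ℝ, ϑ'' t = 16 * t * ∑' k : ℕ,
        ((4 * k + 1) / ((4 * k + 1) ^ 2 + 4 * t ^ 2) ^ 2 : ℝ)) ∧
    (∀ t : ℝ, 0 < t → 0 < ϑ'' t) ∧
    StrictConvexOn ℝ (Set.Ioi (0 : ℝ)) ϑ := by
  have hϑc : Continuous ϑ := continuous_iff_continuousAt.2 fun t => (hϑ' t).continuousAt
  have hphase : ϑ = fun t => phase t / 2 - t / 2 * Real.log π := by
    have := phase_eq_of_Gamma_eq_norm_mul_exp (by fun_prop) (by simp [hϑ0]) hΓ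
    funext t
    rw [this]
    ring
  have hϑ'_eq : ϑ' = fun t => phaseDeriv t / 2 - Real.log π / 2 := by
    funext t
    refine (hϑ' t).unique ?_
    rw [hphase]
    refine ((hasDerivAt_phase t).div_const 2).sub ?_
    exact (((hasDerivAt_id t).div_const 2).mul_const (Real.log π)).congr_deriv (by simp; ring)
  have hϑ''_eq (t : ℝ) : ϑ'' t = 16 * t * ∑' k, summand k t := by
    refine (hϑ'' t).unique ?_
    rw [hϑ'_eq]
    exact (((hasDerivAt_phaseDeriv t).div_const 2).sub_const _).congr_deriv (by ring)
  have hpos (t : ℝ) (ht : 0 < t) : 0 < ϑ'' t := by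
    rw [hϑ''_eq]
    exact mul_pos (by positivity)
      ((summable_summand t).tsum_pos (fun k => (summand_pos k t).le) 0 (summand_pos 0 t))
  refine ⟨summable_summand, hϑ''_eq, hpos, ?_⟩
  refine strictConvexOn_of_deriv2_pos (convex_Ioi 0) hϑc.continuousOn fun x hx => ?_
  rw [interior_Ioi] at hx
  have hderiv : deriv ϑ = ϑ' := funext fun y => (hϑ' y).deriv
  simpa [hderiv, (hϑ'' x).deriv] using hpos x hx

theorem theta_second_deriv_expansion
    (ϑ ϑ' ϑ'' : ℝ → ℝ) (hϑa : ∀ t : ℝ, AnalyticAt ℝ ϑ t) (hϑ0 : ϑ 0 = 0)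
    (hΓ : ∀ t : ℝ, Complex.Gamma (1 / 4 + Complex.I * (t : ℂ) / 2) =
      (‖Complex.Gamma (1 / 4 + Complex.I * (t : ℂ) / 2)‖ : ℂ) *
        Complex.exp (Complex.I * ((ϑ t + t / 2 * Real.log π : ℝ) : ℂ)))
    (hϑ' : ∀ t : ℝ, HasDerivAt ϑ (ϑ' t) t)
    (hϑ'' : ∀ t : ℝ, HasDerivAt ϑ' (ϑ'' t) t) :
    (∀ t : ℝ, Summable (fun k : ℕ =>
        ((4 * k + 1) / ((4 * k + 1) ^ 2 + 4 * t ^ 2) ^ 2 : ℝ))) ∧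
    (∀ t : ℝ, ϑ'' t = 16 * t * ∑' k : ℕ,
        ((4 * k + 1) / ((4 * k + 1) ^ 2 + 4 * t ^ 2) ^ 2 : ℝ)) ∧
    (∀ t : ℝ, 0 < t → 0 < ϑ'' t) ∧
    StrictConvexOn ℝ (Set.Ioi (0 : ℝ)) ϑ :=
  theta_second_deriv_expansion_general ϑ ϑ' ϑ'' hϑ0 hΓ hϑ' hϑ''
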